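/- For every integer n ≥ 2, there exists a rooted non-binary universal tree-based network with n leaves having at most (n-2)^2 + n reticulation vertices; in particular, there exists a rooted non-binary universal tree-based network with n leaves with O(n^2) reticulations. -/

import Mathlib

/-- In-degree of vertex `v` with respect to the directed edge set `E`. -/
def indeg (E : Finset (ℕ × ℕ)) (v : ℕ) : ℕ := (E.filter (fun e => e.2 = v)).card

/-- Out-degree of vertex `v` with respect to the directed edge set `E`. -/
def outdeg (E : Finset (ℕ × ℕ)) (v : ℕ) : ℕ := (E.filter (fun e => e.1 = v)).card

/-- Directed reachability along the edge set `E`. -/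
def Reach (E : Finset (ℕ × ℕ)) (u v : ℕ) : Prop :=
  Relation.ReflTransGen (fun a b => (a, b) ∈ E) u v

/-- A rooted (non-binary) phylogenetic network on `X = {1, …, n}`:
a rooted directed acyclic graph with no parallel edges (edges form a set) in which
the root has indegree 0 and outdegree ≥ 2, every vertex of outdegree 0 (a leaf)
has indegree 1, the set of leaves is exactly `X = {1, …, n}`, and every other
vertex is a tree vertex (indegree 1, outdegree ≥ 2) or a reticulation
(indegree ≥ 2, outdegree 1).  For `n = 1` the network may consist of a single
vertex (covered by the first disjunct of `degree_cond`). -/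
structure RPN (n : ℕ) where
  V : Finset ℕ
  E : Finset (ℕ × ℕ)
  edge_mem : ∀ e ∈ E, e.1 ∈ V ∧ e.2 ∈ V
  no_loop : ∀ e ∈ E, e.1 ≠ e.2
  root : ℕ
  root_mem : root ∈ V
  reach_root : ∀ v ∈ V, Reach E root v
  acyclic : ∀ v, ¬ Relation.TransGen (fun a b => (a, b) ∈ E) v v
  /-- the vertices of outdegree 0 are exactly the leaves `1, …, n` -/
  leaves_eq : V.filter (fun v => outdeg E v = 0) = Finset.Icc 1 n
  /-- degree conditions (or a single-vertex network, allowed when `n = 1`) -/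
  degree_cond : (V = {root} ∧ E = ∅) ∨
    (indeg E root = 0 ∧ 2 ≤ outdeg E root ∧
      ∀ v ∈ V, v ≠ root →
        (outdeg E v = 0 ∧ indeg E v = 1) ∨
        (indeg E v = 1 ∧ 2 ≤ outdeg E v) ∨
        (2 ≤ indeg E v ∧ outdeg E v = 1))

/-- A rooted phylogenetic tree on `X` is a rooted phylogenetic network whose
underlying graph is a tree (for a graph all of whose vertices are reachable
from the root this is equivalent to `|E| + 1 = |V|`). -/
def RPN.IsTree {n : ℕ} (T : RPN n) : Prop := T.E.card + 1 = T.V.card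

/-- `E'` is (the edge set of) a support tree for `N`: a spanning tree of `N`
whose set of leaves equals `X = {1, …, n}`. -/
def IsSupportTree (n : ℕ) (N : RPN n) (E' : Finset (ℕ × ℕ)) : Prop :=
  E' ⊆ N.E ∧ E'.card + 1 = N.V.card ∧
  (∀ v ∈ N.V, Reach E' N.root v) ∧
  N.V.filter (fun v => outdeg E' v = 0) = Finset.Icc 1 n

/-- One step of suppressing a degree-2 vertex `v` (indegree 1 and outdegree 1)
in a rooted graph: remove `v` and replace the edges `(u,v)` and `(v,w)` by `(u,w)`. -/
def SuppressStep (G G' : Finset ℕ × Finset (ℕ × ℕ)) : Prop :=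
  ∃ u v w, v ∈ G.1 ∧ indeg G.2 v = 1 ∧ outdeg G.2 v = 1 ∧
    (u, v) ∈ G.2 ∧ (v, w) ∈ G.2 ∧ u ≠ w ∧
    G'.1 = G.1.erase v ∧ G'.2 = insert (u, w) ((G.2.erase (u, v)).erase (v, w))

/-- No suppressible (degree-2) vertices remain. -/
def NoDeg2 (G : Finset ℕ × Finset (ℕ × ℕ)) : Prop :=
  ∀ v ∈ G.1, ¬ (indeg G.2 v = 1 ∧ outdeg G.2 v = 1)

/-- Graph isomorphism fixing the leaf labels `1, …, n`. -/
def LeafIso (n : ℕ) (G H : Finset ℕ × Finset (ℕ × ℕ)) : Prop :=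
  ∃ φ : ℕ → ℕ, Set.InjOn φ ↑G.1 ∧ G.1.image φ = H.1 ∧
    G.2.image (fun e => (φ e.1, φ e.2)) = H.2 ∧
    ∀ x ∈ Finset.Icc 1 n, x ∈ G.1 → φ x = x

/-- `T` is a base tree for `N`: `T` is a rooted phylogenetic tree on `X` and
some support tree of `N` becomes `T` (up to an isomorphism fixing the leaf
labels) after suppressing all degree-2 vertices; equivalently, some support
tree of `N` is a subdivision of `T`. -/
def IsBaseTree (n : ℕ) (N T : RPN n) : Prop :=
  T.IsTree ∧ ∃ E', IsSupportTree n N E' ∧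
    ∃ G : Finset ℕ × Finset (ℕ × ℕ),
      Relation.ReflTransGen SuppressStep (N.V, E') G ∧
      NoDeg2 G ∧ LeafIso n G (T.V, T.E)

/-- `N` is tree-based if it has a support tree. -/
def TreeBased (n : ℕ) (N : RPN n) : Prop := ∃ E', IsSupportTree n N E'

/-- `N` is universal if every rooted phylogenetic tree on `X` is a base tree for `N`. -/
def UniversalRPN (n : ℕ) (N : RPN n) : Prop :=
  ∀ T : RPN n, T.IsTree → IsBaseTree n N T

/-- The number of reticulation vertices (vertices of indegree at least 2) of `N`. -/
def numReticulations (n : ℕ) (N : RPN n) : ℕ :=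
  (N.V.filter (fun v => 2 ≤ indeg N.E v)).card

/-! The network has tree vertices `t 1, …, t (n-1)` (root `t 1`), above every leaf `ℓ` a
reticulation `s ℓ` whose parents are all the `t i`, and for `3 ≤ j ≤ n - 1` a reticulation
`r j` whose parents are the `t i` with `i < j` and whose child is `t j`, plus the edge
`t 1 → t 2`: that is `2n - 3` reticulations. A tree with `n` leaves has `k ≤ n - 1` internal
vertices; numbering them `1, …, k` along a topological order, the vertex numbered `j` is sent
to `t j`. A tree edge into the leaf `ℓ` is routed as `t i → s ℓ → ℓ`, one into the vertex
numbered `j` as `t i → r j → t j` (or `t 1 → t 2` when `j = 2`), and the unused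
`t (k+1), …, t (n-1)` together with their `r`'s are threaded onto the route of one edge from
`t k` to a leaf. These internally disjoint routes cover the network, so they form a support
tree, and suppressing their interior vertices gives back the tree. For `n = 2` every tree is
the star, which is its own support tree. -/

open Finset

section Degrees

variable {E : Finset (ℕ × ℕ)} {u v w : ℕ}

lemma outdeg_eq_zero_iff : outdeg E v = 0 ↔ ∀ e ∈ E, e.1 ≠ v := by
  rw [outdeg, card_eq_zero, filter_eq_empty_iff]

lemma indeg_eq_zero_iff : indeg E v = 0 ↔ ∀ e ∈ E, e.2 ≠ v := by
  rw [indeg, card_eq_zero, filter_eq_empty_iff]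

lemma outdeg_pos_of_mem (h : (u, v) ∈ E) : 0 < outdeg E u :=
  card_pos.2 ⟨(u, v), mem_filter.2 ⟨h, rfl⟩⟩

lemma indeg_pos_of_mem (h : (u, v) ∈ E) : 0 < indeg E v :=
  card_pos.2 ⟨(u, v), mem_filter.2 ⟨h, rfl⟩⟩

lemma indeg_eq_one_of_forall (h : (u, v) ∈ E)
    (huniq : ∀ e ∈ E, e.2 = v → e = (u, v)) : indeg E v = 1 :=
  card_eq_one.2 ⟨(u, v), eq_singleton_iff_unique_mem.2
    ⟨mem_filter.2 ⟨h, rfl⟩, fun e he => huniq e (mem_filter.1 he).1 (mem_filter.1 he).2⟩⟩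

lemma outdeg_eq_one_of_forall (h : (u, v) ∈ E)
    (huniq : ∀ e ∈ E, e.1 = u → e = (u, v)) : outdeg E u = 1 :=
  card_eq_one.2 ⟨(u, v), eq_singleton_iff_unique_mem.2
    ⟨mem_filter.2 ⟨h, rfl⟩, fun e he => huniq e (mem_filter.1 he).1 (mem_filter.1 he).2⟩⟩

lemma two_le_outdeg_of_mem (h₁ : (u, v) ∈ E) (h₂ : (u, w) ∈ E)
    (hvw : v ≠ w) : 2 ≤ outdeg E u :=
  one_lt_card.2 ⟨_, mem_filter.2 ⟨h₁, rfl⟩, _, mem_filter.2 ⟨h₂, rfl⟩, by simp [hvw]⟩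

lemma two_le_indeg_of_mem (h₁ : (u, w) ∈ E) (h₂ : (v, w) ∈ E)
    (huv : u ≠ v) : 2 ≤ indeg E w :=
  one_lt_card.2 ⟨_, mem_filter.2 ⟨h₁, rfl⟩, _, mem_filter.2 ⟨h₂, rfl⟩, by simp [huv]⟩

lemma sum_outdeg {V : Finset ℕ} (h : ∀ e ∈ E, e.1 ∈ V) :
    ∑ v ∈ V, outdeg E v = #E :=
  (card_eq_sum_card_fiberwise h).symm

lemma sum_indeg {V : Finset ℕ} (h : ∀ e ∈ E, e.2 ∈ V) :
    ∑ v ∈ V, indeg E v = #E :=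
  (card_eq_sum_card_fiberwise h).symm

end Degrees

section ImageGraph

def imageGraph (f : ℕ → ℕ) (G : Finset ℕ × Finset (ℕ × ℕ)) : Finset ℕ × Finset (ℕ × ℕ) :=
  (G.1.image f, G.2.image fun e => (f e.1, f e.2))

variable {V : Finset ℕ} {E : Finset (ℕ × ℕ)} {f : ℕ → ℕ}

lemma injOn_edgeMap (hE : ∀ e ∈ E, e.1 ∈ V ∧ e.2 ∈ V) (hf : Set.InjOn f V) :
    Set.InjOn (fun e : ℕ × ℕ => (f e.1, f e.2)) E := by
  intro a ha b hb hab
  simp only [Prod.mk.injEq] at hab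
  exact Prod.ext (hf (hE a ha).1 (hE b hb).1 hab.1) (hf (hE a ha).2 (hE b hb).2 hab.2)

lemma indeg_image (hE : ∀ e ∈ E, e.1 ∈ V ∧ e.2 ∈ V) (hf : Set.InjOn f V) {v : ℕ}
    (hv : v ∈ V) : indeg (E.image fun e => (f e.1, f e.2)) (f v) = indeg E v := by
  rw [indeg, filter_image,
    card_image_of_injOn ((injOn_edgeMap hE hf).mono (coe_subset.2 (filter_subset _ _)))]
  exact congrArg card (filter_congr fun e he => hf.eq_iff (hE e he).2 hv)

lemma outdeg_image (hE : ∀ e ∈ E, e.1 ∈ V ∧ e.2 ∈ V) (hf : Set.InjOn f V) {v : ℕ}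
    (hv : v ∈ V) : outdeg (E.image fun e => (f e.1, f e.2)) (f v) = outdeg E v := by
  rw [outdeg, filter_image,
    card_image_of_injOn ((injOn_edgeMap hE hf).mono (coe_subset.2 (filter_subset _ _)))]
  exact congrArg card (filter_congr fun e he => hf.eq_iff (hE e he).1 hv)

lemma noDeg2_imageGraph (hE : ∀ e ∈ E, e.1 ∈ V ∧ e.2 ∈ V) (hf : Set.InjOn f V)
    (h : NoDeg2 (V, E)) : NoDeg2 (imageGraph f (V, E)) := by
  unfold NoDeg2 imageGraph
  simp only [forall_mem_image]
  intro v hv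
  rw [indeg_image hE hf hv, outdeg_image hE hf hv]
  exact h v hv

lemma leafIso_imageGraph {n : ℕ} (hE : ∀ e ∈ E, e.1 ∈ V ∧ e.2 ∈ V) (hf : Set.InjOn f V)
    (hX : Icc 1 n ⊆ V) (hfix : ∀ x ∈ Icc 1 n, f x = x) :
    LeafIso n (imageGraph f (V, E)) (V, E) := by
  have hinv : Set.LeftInvOn (Function.invFunOn f V) f V := hf.leftInvOn_invFunOn
  have hinv' : ∀ v ∈ V, Function.invFunOn f V (f v) = v := fun v hv => hinv hv
  unfold imageGraph
  refine ⟨Function.invFunOn f V, ?_, ?_, ?_, ?_⟩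
  · simp only [coe_image]
    rintro _ ⟨a, ha, rfl⟩ _ ⟨b, hb, rfl⟩ hab
    rw [hinv' a ha, hinv' b hb] at hab
    rw [hab]
  · simp only [image_image]
    exact (image_congr fun v hv => hinv' v hv).trans image_id'
  · simp only [image_image]
    exact (image_congr fun e he => by
      simp [Function.comp, hinv' _ (hE e he).1, hinv' _ (hE e he).2]).trans image_id'
  · intro x hx _
    rw [← hfix x hx, hinv' x (hX hx), hfix x hx]

end ImageGraph

section Grading

variable {V : Finset ℕ} {E : Finset (ℕ × ℕ)} {g : ℕ → ℕ}

lemma not_transGen_self_of_grade (hg : ∀ e ∈ E, g e.1 < g e.2) (v : ℕ) :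
    ¬ Relation.TransGen (fun a b => (a, b) ∈ E) v v := by
  have hlt : ∀ a b, Relation.TransGen (fun a b => (a, b) ∈ E) a b → g a < g b := by
    intro a b hab
    induction hab with
    | single h => exact hg _ h
    | tail _ h ih => exact ih.trans (hg _ h)
  exact fun h => lt_irrefl _ (hlt v v h)

lemma reach_of_grade {root : ℕ} (hg : ∀ e ∈ E, g e.1 < g e.2)
    (hin : ∀ v ∈ V, v ≠ root → ∃ u ∈ V, (u, v) ∈ E) : ∀ v ∈ V, Reach E root v := by
  intro v hv
  induction hgv : g v using Nat.strong_induction_on generalizing v with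
  | _ m ih =>
    by_cases hroot : v = root
    · subst hroot; exact .refl
    · obtain ⟨u, hu, huv⟩ := hin v hv hroot
      exact (ih (g u) (hgv ▸ hg _ huv) u hu rfl).tail huv

end Grading

section Paths

def pathE : ℕ → List ℕ → ℕ → Finset (ℕ × ℕ)
  | a, [], b => {(a, b)}
  | a, x :: l, b => insert (a, x) (pathE x l b)

variable {a b x : ℕ} {l : List ℕ} {e : ℕ × ℕ}

lemma image_fst_pathE (a b : ℕ) (l : List ℕ) :
    (pathE a l b).image Prod.fst = insert a l.toFinset := by
  induction l generalizing a with
  | nil => rfl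
  | cons x l ih => simp [pathE, image_insert, ih]

lemma image_snd_pathE (a b : ℕ) (l : List ℕ) :
    (pathE a l b).image Prod.snd = insert b l.toFinset := by
  induction l generalizing a with
  | nil => rfl
  | cons x l ih => simp [pathE, image_insert, ih, insert_comm]

lemma fst_mem_of_mem_pathE (he : e ∈ pathE a l b) : e.1 = a ∨ e.1 ∈ l := by
  simpa [image_fst_pathE] using mem_image_of_mem Prod.fst he

lemma snd_mem_of_mem_pathE (he : e ∈ pathE a l b) : e.2 = b ∨ e.2 ∈ l := by
  simpa [image_snd_pathE] using mem_image_of_mem Prod.snd he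

lemma mk_headD_mem_pathE (a b : ℕ) (l : List ℕ) : (a, l.headD b) ∈ pathE a l b := by
  cases l <;> simp [pathE]

lemma eq_headD_of_mem_pathE (he : e ∈ pathE a l b) (h : e.1 = a) (ha : a ∉ l) :
    e = (a, l.headD b) := by
  cases l with
  | nil => simpa [pathE] using he
  | cons x l =>
    rcases mem_insert.1 he with rfl | he
    · rfl
    · rcases fst_mem_of_mem_pathE he with h' | h' <;> simp_all

lemma snd_injOn_pathE (hl : l.Nodup) (hb : b ∉ l) :
    Set.InjOn Prod.snd (pathE a l b : Set (ℕ × ℕ)) := by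
  induction l generalizing a with
  | nil => intro e he f hf _; simp_all [pathE]
  | cons x l ih =>
    simp only [List.nodup_cons, List.mem_cons, not_or] at hl hb
    intro e he f hf h
    simp only [pathE, coe_insert, Set.mem_insert_iff, mem_coe] at he hf
    have hx : ∀ {g : ℕ × ℕ}, g ∈ pathE x l b → g.2 ≠ x := fun hg => by
      rcases snd_mem_of_mem_pathE hg with h | h
      · rw [h]; exact hb.1
      · exact fun h' => hl.1 (h' ▸ h)
    rcases he with rfl | he <;> rcases hf with rfl | hf
    · rfl
    · exact absurd h.symm (hx hf)
    · exact absurd h (hx he)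
    · exact ih hl.2 hb.2 he hf h

lemma suppressStep_pathE_cons (E₁ : Finset (ℕ × ℕ)) (V : Finset ℕ) (hxV : x ∈ V)
    (hxl : x ∉ l) (hxa : x ≠ a) (hxb : x ≠ b) (hab : a ≠ l.headD b)
    (hE₁ : ∀ e ∈ E₁, e.1 ≠ x ∧ e.2 ≠ x) :
    SuppressStep (V, E₁ ∪ pathE a (x :: l) b) (V.erase x, E₁ ∪ pathE a l b) := by
  have hx_not_tgt : ∀ {w}, (w, x) ∉ pathE x l b := fun hw => by
    rcases snd_mem_of_mem_pathE hw with h | h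
    · exact hxb h
    · exact hxl h
  refine ⟨a, x, l.headD b, hxV, ?_, ?_, ?_, ?_, hab, rfl, ?_⟩
  · refine indeg_eq_one_of_forall (u := a) (by simp [pathE]) fun ⟨c, d⟩ he hd => ?_
    simp only at hd
    subst hd
    simp only [pathE, mem_union, mem_insert] at he
    rcases he with he | he | he
    · exact absurd rfl (hE₁ _ he).2
    · exact he
    · exact absurd he hx_not_tgt
  · refine outdeg_eq_one_of_forall (mem_union_right _ (mem_insert_of_mem
      (mk_headD_mem_pathE x b l))) fun ⟨c, d⟩ he hc => ?_
    simp only at hc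
    subst hc
    simp only [pathE, mem_union, mem_insert] at he
    rcases he with he | he | he
    · exact absurd rfl (hE₁ _ he).1
    · exact absurd (congrArg Prod.fst he) hxa
    · exact eq_headD_of_mem_pathE he rfl hxl
  · simp [pathE]
  · exact mem_union_right _ (mem_insert_of_mem (mk_headD_mem_pathE x b l))
  · show E₁ ∪ pathE a l b = insert (a, l.headD b)
      (((E₁ ∪ insert (a, x) (pathE x l b)).erase (a, x)).erase (x, l.headD b))
    rw [erase_union_distrib, erase_eq_of_notMem (fun h => (hE₁ _ h).2 rfl),
      erase_insert hx_not_tgt, erase_union_distrib,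
      erase_eq_of_notMem (fun h => (hE₁ _ h).1 rfl), ← union_insert]
    congr 1
    cases l with
    | nil => simp [pathE]
    | cons y l =>
      simp only [pathE, List.headD_cons]
      rw [erase_insert fun h => by rcases fst_mem_of_mem_pathE h with h | h <;> simp_all]

lemma suppress_pathE (E₁ : Finset (ℕ × ℕ)) :
    ∀ (l : List ℕ) (V : Finset ℕ) (a b : ℕ), l.Nodup → (∀ x ∈ l, x ∈ V) →
      (∀ x ∈ l, x ≠ a ∧ x ≠ b ∧ ∀ e ∈ E₁, e.1 ≠ x ∧ e.2 ≠ x) → a ≠ b →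
      Relation.ReflTransGen SuppressStep (V, E₁ ∪ pathE a l b)
        (V \ l.toFinset, E₁ ∪ {(a, b)})
  | [], V, a, b, _, _, _, _ => by simpa [pathE] using Relation.ReflTransGen.refl
  | x :: l, V, a, b, hnd, hV, hfresh, hab => by
    simp only [List.nodup_cons] at hnd
    simp only [List.mem_cons, forall_eq_or_imp] at hV hfresh
    have hab' : a ≠ l.headD b := by
      cases l with
      | nil => exact hab
      | cons y l => exact fun h => (hfresh.2 y (by simp)).1 h.symm
    refine .head (suppressStep_pathE_cons E₁ V hV.1 hnd.1 hfresh.1.1 hfresh.1.2.1 hab'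
      hfresh.1.2.2) ?_
    have hsdiff : V \ (x :: l).toFinset = V.erase x \ l.toFinset := by
      ext
      simp only [mem_sdiff, List.toFinset_cons, mem_insert, mem_erase, List.mem_toFinset]
      tauto
    rw [hsdiff]
    exact suppress_pathE E₁ l (V.erase x) a b hnd.2
      (fun y hy => mem_erase.2 ⟨fun h => hnd.1 (h ▸ hy), hV.2 y hy⟩) hfresh.2 hab

end Paths

structure Route where
  src : ℕ
  mids : List ℕ
  tgt : ℕ

namespace Route

def edges (r : Route) : Finset (ℕ × ℕ) := pathE r.src r.mids r.tgt

def shortcut (r : Route) : ℕ × ℕ := (r.src, r.tgt)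

end Route

def routesE (L : List Route) : Finset (ℕ × ℕ) := L.foldr (fun r acc => r.edges ∪ acc) ∅

section Routes

variable {L : List Route} {e : ℕ × ℕ} {x : ℕ}

lemma mem_routesE : e ∈ routesE L ↔ ∃ r ∈ L, e ∈ r.edges := by
  induction L with
  | nil => simp [routesE]
  | cons r L ih => simp_all [routesE]

lemma image_fst_routesE (L : List Route) :
    (routesE L).image Prod.fst = (L.map Route.src).toFinset ∪ (L.flatMap Route.mids).toFinset := by
  induction L with
  | nil => rfl
  | cons r L ih =>
    simp only [routesE, List.foldr_cons] at ih ⊢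
    rw [image_union, ih, Route.edges, image_fst_pathE]
    ext; simp only [mem_union, mem_insert, List.mem_toFinset, List.map_cons, List.mem_cons,
      List.flatMap_cons, List.mem_append]; tauto

lemma image_snd_routesE (L : List Route) :
    (routesE L).image Prod.snd = (L.map Route.tgt).toFinset ∪ (L.flatMap Route.mids).toFinset := by
  induction L with
  | nil => rfl
  | cons r L ih =>
    simp only [routesE, List.foldr_cons] at ih ⊢
    rw [image_union, ih, Route.edges, image_snd_pathE]
    ext; simp only [mem_union, mem_insert, List.mem_toFinset, List.map_cons, List.mem_cons,
      List.flatMap_cons, List.mem_append]; tauto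

lemma ne_of_mem_routesE (hx : x ∉ L.flatMap Route.mids) (hends : ∀ r ∈ L, r.src ≠ x ∧ r.tgt ≠ x)
    (he : e ∈ routesE L) : e.1 ≠ x ∧ e.2 ≠ x := by
  have h1 := mem_image_of_mem Prod.fst he
  have h2 := mem_image_of_mem Prod.snd he
  rw [image_fst_routesE] at h1
  rw [image_snd_routesE] at h2
  simp only [mem_union, List.mem_toFinset, List.mem_map] at h1 h2
  constructor <;> rintro rfl
  · rcases h1 with ⟨r, hr, h⟩ | h
    · exact (hends r hr).1 h
    · exact hx h
  · rcases h2 with ⟨r, hr, h⟩ | h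
    · exact (hends r hr).2 h
    · exact hx h

lemma disjoint_mids (hnd : (L.flatMap Route.mids).Nodup) {r r' : Route} (hr : r ∈ L)
    (hr' : r' ∈ L) (hne : r ≠ r') : r.mids.Disjoint r'.mids := by
  have : Std.Symm (Function.onFun List.Disjoint Route.mids) := ⟨fun _ _ h => h.symm⟩
  exact (List.nodup_flatMap.1 hnd).2.forall hr hr' hne

lemma snd_injOn_routesE (hnd : (L.flatMap Route.mids).Nodup)
    (hends : ∀ x ∈ L.flatMap Route.mids, ∀ r ∈ L, r.src ≠ x ∧ r.tgt ≠ x)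
    (htgt : ∀ r ∈ L, ∀ r' ∈ L, r.tgt = r'.tgt → r = r') :
    Set.InjOn Prod.snd (routesE L : Set (ℕ × ℕ)) := by
  intro e he f hf h
  obtain ⟨r, hr, he⟩ := mem_routesE.1 he
  obtain ⟨r', hr', hf⟩ := mem_routesE.1 hf
  have hmid : ∀ {y r₀}, r₀ ∈ L → y ∈ r₀.mids → y ∈ L.flatMap Route.mids :=
    fun h hy => List.mem_flatMap.2 ⟨_, h, hy⟩
  by_cases hrr : r = r'
  · subst hrr
    exact snd_injOn_pathE ((List.nodup_flatMap.1 hnd).1 r hr)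
      (fun hc => (hends _ (hmid hr hc) r hr).2 rfl) he hf h
  · exfalso
    rcases snd_mem_of_mem_pathE he with he' | he' <;>
      rcases snd_mem_of_mem_pathE hf with hf' | hf'
    · exact hrr (htgt r hr r' hr' (he'.symm.trans (h.trans hf')))
    · exact (hends _ (hmid hr' hf') r hr).2 (he'.symm.trans h)
    · exact (hends _ (hmid hr he') r' hr').2 (hf'.symm.trans h.symm)
    · exact disjoint_mids hnd hr hr' hrr he' (h ▸ hf')

lemma suppress_route_cons (r : Route) (L : List Route) (V : Finset ℕ) (F : Finset (ℕ × ℕ))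
    (hnd : r.mids.Nodup) (hV : ∀ x ∈ r.mids, x ∈ V)
    (hfresh : ∀ x ∈ r.mids, r.src ≠ x ∧ r.tgt ≠ x ∧ ∀ e ∈ F ∪ routesE L, e.1 ≠ x ∧ e.2 ≠ x)
    (hne : r.src ≠ r.tgt) :
    Relation.ReflTransGen SuppressStep (V, F ∪ routesE (r :: L))
      (V \ r.mids.toFinset, F ∪ {r.shortcut} ∪ routesE L) := by
  have h := suppress_pathE (F ∪ routesE L) r.mids V r.src r.tgt hnd hV
    (fun x hx => ⟨(hfresh x hx).1.symm, (hfresh x hx).2.1.symm, (hfresh x hx).2.2⟩) hne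
  have hE : F ∪ routesE (r :: L) = F ∪ routesE L ∪ r.edges := by
    simp only [routesE, List.foldr_cons]; ac_rfl
  have hE' : F ∪ routesE L ∪ {(r.src, r.tgt)} = F ∪ {r.shortcut} ∪ routesE L := by
    rw [Route.shortcut]; ac_rfl
  rw [hE, ← hE']
  exact h

lemma suppress_routes :
    ∀ (L : List Route) (V : Finset ℕ) (F : Finset (ℕ × ℕ)),
      (L.flatMap Route.mids).Nodup → (∀ x ∈ L.flatMap Route.mids, x ∈ V) →
      (∀ x ∈ L.flatMap Route.mids, ∀ e ∈ F, e.1 ≠ x ∧ e.2 ≠ x) →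
      (∀ x ∈ L.flatMap Route.mids, ∀ r ∈ L, r.src ≠ x ∧ r.tgt ≠ x) →
      (∀ r ∈ L, r.src ≠ r.tgt) →
      Relation.ReflTransGen SuppressStep (V, F ∪ routesE L)
        (V \ (L.flatMap Route.mids).toFinset, F ∪ (L.map Route.shortcut).toFinset)
  | [], V, F, _, _, _, _, _ => by simpa [routesE] using Relation.ReflTransGen.refl
  | r :: L, V, F, hnd, hV, hF, hends, hne => by
    simp only [List.flatMap_cons, List.mem_append, List.nodup_append] at hnd hV hF hends
    obtain ⟨hndr, hndL, hdisj⟩ := hnd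
    have hfirst := suppress_route_cons r L V F hndr (fun x hx => hV x (.inl hx))
      (fun x hx => ⟨(hends x (.inl hx) r (by simp)).1, (hends x (.inl hx) r (by simp)).2,
        fun e he => by
          rcases mem_union.1 he with he | he
          · exact hF x (.inl hx) e he
          · exact ne_of_mem_routesE (fun h => hdisj x hx x h rfl)
              (fun r' hr' => hends x (.inl hx) r' (by simp [hr'])) he⟩)
      (hne r (by simp))
    have hrest := suppress_routes L (V \ r.mids.toFinset) (F ∪ {r.shortcut}) hndL
      (fun x hx => mem_sdiff.2 ⟨hV x (.inr hx), fun h => hdisj x (by simpa using h) x hx rfl⟩)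
      (fun x hx e he => by
        rcases mem_union.1 he with he | he
        · exact hF x (.inr hx) e he
        · rw [mem_singleton.1 he]
          exact hends x (.inr hx) r (by simp))
      (fun x hx r' hr' => hends x (.inr hx) r' (by simp [hr']))
      (fun r' hr' => hne r' (by simp [hr']))
    have hV' : V \ (r.mids ++ L.flatMap Route.mids).toFinset =
        (V \ r.mids.toFinset) \ (L.flatMap Route.mids).toFinset := by
      ext; simp only [mem_sdiff, List.toFinset_append, mem_union]; tauto
    have hF' : F ∪ ((r :: L).map Route.shortcut).toFinset =
        F ∪ {r.shortcut} ∪ (L.map Route.shortcut).toFinset := by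
      rw [List.map_cons, List.toFinset_cons, union_assoc, ← insert_eq]
    rw [List.flatMap_cons, hV', hF']
    exact hfirst.trans hrest

end Routes

section Rank

variable {α β : Type*} [LinearOrder β]

def rankIn (s : Finset α) (f : α → β) (a : α) : ℕ := #{b ∈ s | f b < f a} + 1

variable {s : Finset α} {f : α → β} {a b : α}

lemma rankIn_lt_rankIn (hb : b ∈ s) (h : f b < f a) : rankIn s f b < rankIn s f a := by
  refine Nat.succ_lt_succ (card_lt_card ((ssubset_iff_of_subset ?_).2
    ⟨b, mem_filter.2 ⟨hb, h⟩, fun hc => lt_irrefl _ (mem_filter.1 hc).2⟩))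
  exact fun c hc => mem_filter.2 ⟨(mem_filter.1 hc).1, (mem_filter.1 hc).2.trans h⟩

lemma rankIn_injOn (hf : Set.InjOn f s) : Set.InjOn (rankIn s f) s := by
  intro a ha b hb h
  rcases lt_trichotomy (f a) (f b) with hab | hab | hab
  · exact absurd h (rankIn_lt_rankIn ha hab).ne
  · exact hf ha hb hab
  · exact absurd h (rankIn_lt_rankIn hb hab).ne'

lemma rankIn_mem_Icc (ha : a ∈ s) : rankIn s f a ∈ Icc 1 #s := by
  refine mem_Icc.2 ⟨Nat.le_add_left _ _, Nat.succ_le_of_lt (card_lt_card ?_)⟩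
  exact (ssubset_iff_of_subset (filter_subset _ _)).2
    ⟨a, ha, fun hc => lt_irrefl _ (mem_filter.1 hc).2⟩

lemma image_rankIn (hf : Set.InjOn f s) : s.image (rankIn s f) = Icc 1 #s :=
  eq_of_subset_of_card_le (image_subset_iff.2 fun _ ha => rankIn_mem_Icc ha)
    (by rw [Nat.card_Icc, card_image_of_injOn (rankIn_injOn hf)]; omega)

lemma rankIn_eq_one (h : ∀ b ∈ s, f a ≤ f b) : rankIn s f a = 1 := by
  simpa [rankIn, filter_eq_empty_iff] using fun b hb => h b hb

end Rank

namespace RPN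

variable {n : ℕ} (N : RPN n)

def internal : Finset ℕ := N.V \ Icc 1 n

lemma indeg_root : indeg N.E N.root = 0 := by
  rcases N.degree_cond with ⟨-, hE⟩ | ⟨h, -⟩
  · simp [indeg, hE]
  · exact h

lemma noDeg2 : NoDeg2 (N.V, N.E) := by
  rintro v hv ⟨hin, hout⟩
  dsimp only at hin hout
  rcases N.degree_cond with ⟨-, hE⟩ | ⟨-, -, hdeg⟩
  · simp [indeg, hE] at hin
  · by_cases hr : v = N.root
    · subst hr; rw [N.indeg_root] at hin; exact zero_ne_one hin
    · rcases hdeg v hv hr with ⟨h, -⟩ | ⟨-, h⟩ | ⟨h, -⟩ <;> omega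

lemma outdeg_eq_zero_iff_mem_Icc {v : ℕ} (hv : v ∈ N.V) : outdeg N.E v = 0 ↔ v ∈ Icc 1 n := by
  rw [← N.leaves_eq, mem_filter]
  exact ⟨fun h => ⟨hv, h⟩, fun h => h.2⟩

lemma Icc_subset_V : Icc 1 n ⊆ N.V := fun x hx => by
  rw [← N.leaves_eq] at hx
  exact (mem_filter.1 hx).1

lemma outdeg_of_mem_Icc {x : ℕ} (hx : x ∈ Icc 1 n) : outdeg N.E x = 0 :=
  (N.outdeg_eq_zero_iff_mem_Icc (N.Icc_subset_V hx)).2 hx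

lemma V_eq_Icc_union_internal : N.V = Icc 1 n ∪ N.internal :=
  (union_sdiff_of_subset N.Icc_subset_V).symm

lemma exists_mem_E_of_ne_root {v : ℕ} (hv : v ∈ N.V) (hne : v ≠ N.root) :
    ∃ u, (u, v) ∈ N.E := by
  rcases (N.reach_root v hv).cases_tail with h | ⟨u, -, hu⟩
  · exact absurd h hne
  · exact ⟨u, hu⟩

variable {N}

lemma fst_mem_internal {e : ℕ × ℕ} (he : e ∈ N.E) : e.1 ∈ N.internal := by
  refine mem_sdiff.2 ⟨(N.edge_mem e he).1, fun h => ?_⟩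
  have := outdeg_pos_of_mem (show (e.1, e.2) ∈ N.E from he)
  rw [N.outdeg_of_mem_Icc h] at this
  exact lt_irrefl _ this

lemma snd_ne_root {e : ℕ × ℕ} (he : e ∈ N.E) : e.2 ≠ N.root := fun h => by
  have := indeg_pos_of_mem (show (e.1, e.2) ∈ N.E from he)
  rw [h, N.indeg_root] at this
  exact lt_irrefl _ this

variable (N)

lemma image_fst_E : N.E.image Prod.fst = N.internal := by
  ext v
  refine ⟨fun h => ?_, fun h => ?_⟩
  · obtain ⟨e, he, rfl⟩ := mem_image.1 h
    exact fst_mem_internal he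
  · obtain ⟨hv, hleaf⟩ := mem_sdiff.1 h
    rw [← N.outdeg_eq_zero_iff_mem_Icc hv, outdeg_eq_zero_iff] at hleaf
    push Not at hleaf
    exact mem_image.2 hleaf

lemma image_snd_E : N.E.image Prod.snd = N.V.erase N.root := by
  ext v
  refine ⟨fun h => ?_, fun h => ?_⟩
  · obtain ⟨e, he, rfl⟩ := mem_image.1 h
    exact mem_erase.2 ⟨snd_ne_root he, (N.edge_mem e he).2⟩
  · obtain ⟨u, hu⟩ := N.exists_mem_E_of_ne_root (mem_erase.1 h).2 (mem_erase.1 h).1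
    exact mem_image.2 ⟨_, hu, rfl⟩

lemma degree_cond_of_two_le (hn : 2 ≤ n) :
    indeg N.E N.root = 0 ∧ 2 ≤ outdeg N.E N.root ∧
      ∀ v ∈ N.V, v ≠ N.root →
        (outdeg N.E v = 0 ∧ indeg N.E v = 1) ∨
        (indeg N.E v = 1 ∧ 2 ≤ outdeg N.E v) ∨
        (2 ≤ indeg N.E v ∧ outdeg N.E v = 1) := by
  refine N.degree_cond.resolve_left fun ⟨hV, _⟩ => ?_
  have h := card_le_card (N.Icc_subset_V)
  rw [hV, Nat.card_Icc, card_singleton] at h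
  omega

lemma root_mem_internal (hn : 2 ≤ n) : N.root ∈ N.internal := by
  refine mem_sdiff.2 ⟨N.root_mem, fun h => ?_⟩
  have := (N.degree_cond_of_two_le hn).2.1
  rw [N.outdeg_of_mem_Icc h] at this
  omega

variable {N}

lemma IsTree.indeg_eq_one (hT : N.IsTree) {v : ℕ} (hv : v ∈ N.V) (hne : v ≠ N.root) :
    indeg N.E v = 1 := by
  have hsum : ∑ w ∈ N.V.erase N.root, 1 = ∑ w ∈ N.V.erase N.root, indeg N.E w := by
    rw [sum_erase _ N.indeg_root, sum_indeg fun e he => (N.edge_mem e he).2, sum_const,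
      smul_eq_mul, mul_one, card_erase_of_mem N.root_mem]
    unfold RPN.IsTree at hT
    omega
  refine ((sum_eq_sum_iff_of_le fun w hw => ?_).1 hsum v (mem_erase.2 ⟨hne, hv⟩)).symm
  obtain ⟨u, hu⟩ := N.exists_mem_E_of_ne_root (mem_erase.1 hw).2 (mem_erase.1 hw).1
  exact indeg_pos_of_mem hu

lemma IsTree.indeg_le_one (hT : N.IsTree) {v : ℕ} (hv : v ∈ N.V) : indeg N.E v ≤ 1 := by
  by_cases hr : v = N.root
  · rw [hr, N.indeg_root]; exact zero_le_one
  · exact (hT.indeg_eq_one hv hr).le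

lemma IsTree.numReticulations_eq_zero (hT : N.IsTree) : numReticulations n N = 0 :=
  card_eq_zero.2 (filter_eq_empty_iff.2 fun v hv h => by have := hT.indeg_le_one hv; omega)

lemma IsTree.eq_of_snd_eq (hT : N.IsTree) {e f : ℕ × ℕ} (he : e ∈ N.E) (hf : f ∈ N.E)
    (h : e.2 = f.2) : e = f :=
  card_le_one.1 (hT.indeg_eq_one (N.edge_mem e he).2 (snd_ne_root he)).le _
    (mem_filter.2 ⟨he, rfl⟩) _ (mem_filter.2 ⟨hf, h.symm⟩)

lemma IsTree.two_le_outdeg (hT : N.IsTree) (hn : 2 ≤ n) {v : ℕ} (hv : v ∈ N.internal) :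
    2 ≤ outdeg N.E v := by
  obtain ⟨hvV, hleaf⟩ := mem_sdiff.1 hv
  by_cases hr : v = N.root
  · rw [hr]; exact (N.degree_cond_of_two_le hn).2.1
  · have := hT.indeg_eq_one hvV hr
    rcases (N.degree_cond_of_two_le hn).2.2 v hvV hr with ⟨h, -⟩ | ⟨-, h⟩ | ⟨h, -⟩
    · exact absurd ((N.outdeg_eq_zero_iff_mem_Icc hvV).1 h) hleaf
    · exact h
    · omega

/-- Every internal vertex has at least two children, so a tree has fewer internal vertices
than leaves. -/
lemma IsTree.card_internal_le (hT : N.IsTree) (hn : 2 ≤ n) : #N.internal ≤ n - 1 := by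
  have hdisj : Disjoint (Icc 1 n) N.internal := disjoint_sdiff
  have hsum := sum_outdeg fun e he => (N.edge_mem e he).1
  rw [N.V_eq_Icc_union_internal, sum_union hdisj,
    sum_eq_zero fun x hx => N.outdeg_of_mem_Icc hx, zero_add] at hsum
  have h2 : ∑ _v ∈ N.internal, 2 ≤ ∑ v ∈ N.internal, outdeg N.E v :=
    sum_le_sum fun v hv => hT.two_le_outdeg hn hv
  have hV := congrArg card N.V_eq_Icc_union_internal
  rw [card_union_of_disjoint hdisj, Nat.card_Icc] at hV
  rw [sum_const, smul_eq_mul] at h2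
  unfold RPN.IsTree at hT
  omega

open Classical in
noncomputable def numAncestors (N : RPN n) (v : ℕ) : ℕ :=
  #{u ∈ N.V | Relation.TransGen (fun a b => (a, b) ∈ N.E) u v}

noncomputable def topoKey (N : RPN n) (v : ℕ) : Lex (ℕ × ℕ) := toLex (N.numAncestors v, v)

/-- A numbering `1, …, #N.internal` of the internal vertices along which edges increase. -/
noncomputable def topoRank (N : RPN n) : ℕ → ℕ := rankIn N.internal N.topoKey

lemma numAncestors_lt_of_mem {a b : ℕ} (h : (a, b) ∈ N.E) :
    N.numAncestors a < N.numAncestors b := by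
  classical
  refine card_lt_card ((ssubset_iff_of_subset fun u hu => ?_).2
    ⟨a, mem_filter.2 ⟨(N.edge_mem _ h).1, .single h⟩, fun hc => N.acyclic a (mem_filter.1 hc).2⟩)
  exact mem_filter.2 ⟨(mem_filter.1 hu).1, (mem_filter.1 hu).2.tail h⟩

lemma numAncestors_eq_zero_iff {v : ℕ} (hv : v ∈ N.V) : N.numAncestors v = 0 ↔ v = N.root := by
  classical
  simp only [numAncestors, card_eq_zero, filter_eq_empty_iff]
  constructor
  · intro h
    by_contra hne
    rcases (N.reach_root v hv).cases_head with h' | ⟨c, hc, hcv⟩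
    · exact hne h'.symm
    · exact h N.root_mem (.head' hc hcv)
  · rintro rfl u _ hu
    obtain ⟨c, -, hc⟩ := Relation.TransGen.tail'_iff.1 hu
    have := indeg_pos_of_mem hc
    rw [N.indeg_root] at this
    exact lt_irrefl _ this

lemma topoRank_lt_of_mem {a b : ℕ} (h : (a, b) ∈ N.E) :
    N.topoRank a < N.topoRank b :=
  rankIn_lt_rankIn (fst_mem_internal (e := (a, b)) h)
    (Prod.Lex.toLex_lt_toLex.2 (.inl (numAncestors_lt_of_mem h)))

lemma topoRank_injOn : Set.InjOn N.topoRank N.internal :=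
  rankIn_injOn fun _ _ _ _ h => congrArg Prod.snd (toLex.injective h)

lemma topoRank_mem_Icc {v : ℕ} (hv : v ∈ N.internal) : N.topoRank v ∈ Icc 1 #N.internal :=
  rankIn_mem_Icc hv

lemma image_topoRank : N.internal.image N.topoRank = Icc 1 #N.internal :=
  image_rankIn fun _ _ _ _ h => congrArg Prod.snd (toLex.injective h)

lemma topoRank_root : N.topoRank N.root = 1 := by
  refine rankIn_eq_one fun b hb => ?_
  have hbV := (mem_sdiff.1 hb).1
  rcases Nat.eq_zero_or_pos (N.numAncestors b) with h | h
  · rw [(numAncestors_eq_zero_iff hbV).1 h]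
  · refine (Prod.Lex.toLex_lt_toLex.2 (.inl ?_)).le
    rwa [(numAncestors_eq_zero_iff N.root_mem).2 rfl]

end RPN

lemma isBaseTree_of_suppress {n : ℕ} {N T : RPN n} (hT : T.IsTree) {E' : Finset (ℕ × ℕ)}
    (hE' : IsSupportTree n N E') {f : ℕ → ℕ} (hf : Set.InjOn f T.V)
    (hfix : ∀ x ∈ Icc 1 n, f x = x)
    (h : Relation.ReflTransGen SuppressStep (N.V, E') (imageGraph f (T.V, T.E))) :
    IsBaseTree n N T :=
  ⟨hT, E', hE', _, h, noDeg2_imageGraph T.edge_mem hf T.noDeg2,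
    leafIso_imageGraph T.edge_mem hf T.Icc_subset_V hfix⟩

lemma RPN.IsTree.isSupportTree_E {n : ℕ} {N : RPN n} (hN : N.IsTree) : IsSupportTree n N N.E :=
  ⟨subset_rfl, hN, N.reach_root, N.leaves_eq⟩

/-- Leaves `1, …, n`, tree vertices `t j = n + j` (`1 ≤ j ≤ n - 1`, root `t 1`),
reticulations `r j = 2n + j` (`3 ≤ j ≤ n - 1`) and `s ℓ = 3n + ℓ` (`1 ≤ ℓ ≤ n`). -/
def netV (n : ℕ) : Finset ℕ :=
  Icc 1 n ∪ Icc (n + 1) (2 * n - 1) ∪ Icc (2 * n + 3) (3 * n - 1) ∪ Icc (3 * n + 1) (4 * n)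

/-- In order: `t i → s ℓ`, `s ℓ → ℓ`, `t 1 → t 2`, `t i → r j` for `i < j`, `r j → t j`. -/
def netE (n : ℕ) : Finset (ℕ × ℕ) :=
  (netV n ×ˢ netV n).filter fun p =>
    (n < p.1 ∧ p.1 < 2 * n ∧ 3 * n < p.2) ∨
    (3 * n < p.1 ∧ p.2 + 3 * n = p.1) ∨
    (p.1 = n + 1 ∧ p.2 = n + 2) ∨
    (n < p.1 ∧ p.1 < 2 * n ∧ 2 * n + 3 ≤ p.2 ∧ p.2 < 3 * n ∧ p.1 + n < p.2) ∨
    (2 * n + 3 ≤ p.1 ∧ p.1 < 3 * n ∧ p.2 + n = p.1)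

section Network

variable {n : ℕ}

lemma mem_netV {x : ℕ} : x ∈ netV n ↔ (1 ≤ x ∧ x ≤ n) ∨ (n + 1 ≤ x ∧ x ≤ 2 * n - 1) ∨
    (2 * n + 3 ≤ x ∧ x ≤ 3 * n - 1) ∨ (3 * n + 1 ≤ x ∧ x ≤ 4 * n) := by
  simp only [netV, mem_union, mem_Icc, or_assoc]

lemma mem_netE {a b : ℕ} : (a, b) ∈ netE n ↔ a ∈ netV n ∧ b ∈ netV n ∧
    ((n < a ∧ a < 2 * n ∧ 3 * n < b) ∨
    (3 * n < a ∧ b + 3 * n = a) ∨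
    (a = n + 1 ∧ b = n + 2) ∨
    (n < a ∧ a < 2 * n ∧ 2 * n + 3 ≤ b ∧ b < 3 * n ∧ a + n < b) ∨
    (2 * n + 3 ≤ a ∧ a < 3 * n ∧ b + n = a)) := by
  simp only [netE, mem_filter, mem_product, and_assoc]

lemma netE_mem_netV {e : ℕ × ℕ} (he : e ∈ netE n) : e.1 ∈ netV n ∧ e.2 ∈ netV n :=
  ⟨(mem_netE.1 he).1, (mem_netE.1 he).2.1⟩

/-- `r j` is graded just below `t j`, so that `t i → r j → t j` climbs for `i < j`. -/
def netGrade (n x : ℕ) : ℕ :=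
  if x ≤ n then 3 * n + 3 else if x < 2 * n then 3 * (x - n)
  else if x < 3 * n then 3 * (x - 2 * n) - 1 else 3 * n + 1

lemma netGrade_lt_of_mem {e : ℕ × ℕ} (he : e ∈ netE n) : netGrade n e.1 < netGrade n e.2 := by
  obtain ⟨a, b⟩ := e
  rw [mem_netE, mem_netV, mem_netV] at he
  simp only [netGrade]
  split_ifs <;> omega

lemma outdeg_netE_leaf {x : ℕ} (hx : x ≤ n) : outdeg (netE n) x = 0 :=
  outdeg_eq_zero_iff.2 fun ⟨a, b⟩ he hax => by
    rw [mem_netE, mem_netV, mem_netV] at he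
    simp only at hax
    omega

lemma indeg_netE_leaf {x : ℕ} (hx : x ∈ Icc 1 n) : indeg (netE n) x = 1 := by
  rw [mem_Icc] at hx
  refine indeg_eq_one_of_forall (u := 3 * n + x) (by rw [mem_netE, mem_netV, mem_netV]; omega)
    fun ⟨a, b⟩ he hbx => ?_
  simp only at hbx
  rw [mem_netE, mem_netV, mem_netV] at he
  simp only [Prod.mk.injEq]
  omega

lemma indeg_netE_root : indeg (netE n) (n + 1) = 0 :=
  indeg_eq_zero_iff.2 fun ⟨a, b⟩ he hb => by
    rw [mem_netE, mem_netV, mem_netV] at he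
    simp only at hb
    omega

lemma indeg_netE_second (hn : 3 ≤ n) : indeg (netE n) (n + 2) = 1 :=
  indeg_eq_one_of_forall (u := n + 1) (by rw [mem_netE, mem_netV, mem_netV]; omega)
    fun ⟨a, b⟩ he hb => by
      simp only at hb
      rw [mem_netE, mem_netV, mem_netV] at he
      simp only [Prod.mk.injEq]
      omega

lemma indeg_netE_tree {x : ℕ} (h₁ : n + 3 ≤ x) (h₂ : x < 2 * n) : indeg (netE n) x = 1 :=
  indeg_eq_one_of_forall (u := x + n) (by rw [mem_netE, mem_netV, mem_netV]; omega)
    fun ⟨a, b⟩ he hb => by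
      simp only at hb
      rw [mem_netE, mem_netV, mem_netV] at he
      simp only [Prod.mk.injEq]
      omega

lemma two_le_outdeg_netE_tree (hn : 3 ≤ n) {x : ℕ} (h₁ : n < x) (h₂ : x < 2 * n) :
    2 ≤ outdeg (netE n) x :=
  two_le_outdeg_of_mem (v := 3 * n + 1) (w := 3 * n + 2)
    (by rw [mem_netE, mem_netV, mem_netV]; omega) (by rw [mem_netE, mem_netV, mem_netV]; omega)
    (by omega)

lemma two_le_indeg_netE_ret (hn : 3 ≤ n) {x : ℕ} (hx : x ∈ netV n) (h : 2 * n + 3 ≤ x) :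
    2 ≤ indeg (netE n) x :=
  two_le_indeg_of_mem (u := n + 1) (v := n + 2)
    (by rw [mem_netE, mem_netV, mem_netV]; rw [mem_netV] at hx; omega)
    (by rw [mem_netE, mem_netV, mem_netV]; rw [mem_netV] at hx; omega)
    (by omega)

lemma outdeg_netE_ret {x : ℕ} (h₁ : 2 * n + 3 ≤ x) (h₂ : x < 3 * n) : outdeg (netE n) x = 1 :=
  outdeg_eq_one_of_forall (v := x - n) (by rw [mem_netE, mem_netV, mem_netV]; omega)
    fun ⟨a, b⟩ he ha => by
      simp only at ha
      rw [mem_netE, mem_netV, mem_netV] at he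
      simp only [Prod.mk.injEq]
      omega

lemma outdeg_netE_leafRet {x : ℕ} (h₁ : 3 * n < x) (h₂ : x ≤ 4 * n) : outdeg (netE n) x = 1 :=
  outdeg_eq_one_of_forall (v := x - 3 * n) (by rw [mem_netE, mem_netV, mem_netV]; omega)
    fun ⟨a, b⟩ he ha => by
      simp only at ha
      rw [mem_netE, mem_netV, mem_netV] at he
      simp only [Prod.mk.injEq]
      omega

lemma exists_netE_parent (hn : 3 ≤ n) {v : ℕ} (hv : v ∈ netV n) (hne : v ≠ n + 1) :
    ∃ u ∈ netV n, (u, v) ∈ netE n := by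
  rw [mem_netV] at hv
  have hin : ∀ u, (u, v) ∈ netE n → ∃ u ∈ netV n, (u, v) ∈ netE n :=
    fun u h => ⟨u, (netE_mem_netV h).1, h⟩
  rcases hv with hv | hv | hv | hv
  · exact hin (3 * n + v) (by rw [mem_netE, mem_netV, mem_netV]; omega)
  · by_cases h2 : v = n + 2
    · exact hin (n + 1) (by rw [mem_netE, mem_netV, mem_netV]; omega)
    · exact hin (v + n) (by rw [mem_netE, mem_netV, mem_netV]; omega)
  · exact hin (n + 1) (by rw [mem_netE, mem_netV, mem_netV]; omega)
  · exact hin (n + 1) (by rw [mem_netE, mem_netV, mem_netV]; omega)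

lemma filter_netV_outdeg_eq_zero (hn : 3 ≤ n) :
    (netV n).filter (fun v => outdeg (netE n) v = 0) = Icc 1 n := by
  ext x
  simp only [mem_filter, mem_Icc]
  constructor
  · rintro ⟨hx, hout⟩
    rw [mem_netV] at hx
    rcases hx with hx | hx | hx | hx
    · exact hx
    · have := two_le_outdeg_netE_tree hn (x := x) (by omega) (by omega); omega
    · have := outdeg_netE_ret (n := n) (x := x) (by omega) (by omega); omega
    · have := outdeg_netE_leafRet (n := n) (x := x) (by omega) (by omega); omega
  · exact fun hx => ⟨by rw [mem_netV]; omega, outdeg_netE_leaf hx.2⟩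

end Network

def net (n : ℕ) (hn : 3 ≤ n) : RPN n where
  V := netV n
  E := netE n
  edge_mem _ he := netE_mem_netV he
  no_loop e he := (netGrade_lt_of_mem he).ne ∘ congrArg (netGrade n)
  root := n + 1
  root_mem := by rw [mem_netV]; omega
  reach_root := reach_of_grade (fun _ he => netGrade_lt_of_mem he) fun _ hv hne =>
    exists_netE_parent hn hv hne
  acyclic := not_transGen_self_of_grade fun _ he => netGrade_lt_of_mem he
  leaves_eq := filter_netV_outdeg_eq_zero hn
  degree_cond := by
    refine .inr ⟨indeg_netE_root, two_le_outdeg_netE_tree hn (by omega) (by omega),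
      fun v hv hne => ?_⟩
    rw [mem_netV] at hv
    rcases hv with hv | hv | hv | hv
    · exact .inl ⟨outdeg_netE_leaf hv.2, indeg_netE_leaf (mem_Icc.2 hv)⟩
    · refine .inr (.inl ⟨?_, two_le_outdeg_netE_tree hn (by omega) (by omega)⟩)
      by_cases h2 : v = n + 2
      · rw [h2]; exact indeg_netE_second hn
      · exact indeg_netE_tree (by omega) (by omega)
    · exact .inr (.inr ⟨two_le_indeg_netE_ret hn (by rw [mem_netV]; omega) hv.1,
        outdeg_netE_ret hv.1 (by omega)⟩)
    · exact .inr (.inr ⟨two_le_indeg_netE_ret hn (by rw [mem_netV]; omega) (by omega),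
        outdeg_netE_leafRet (by omega) hv.2⟩)

lemma numReticulations_net (n : ℕ) (hn : 3 ≤ n) : numReticulations n (net n hn) ≤ 2 * n - 3 := by
  have hsub : (netV n).filter (fun v => 2 ≤ indeg (netE n) v) ⊆
      Icc (2 * n + 3) (3 * n - 1) ∪ Icc (3 * n + 1) (4 * n) := by
    intro x hx
    obtain ⟨hxV, hx⟩ := mem_filter.1 hx
    rw [mem_netV] at hxV
    rw [mem_union, mem_Icc, mem_Icc]
    rcases hxV with hxV | hxV | hxV | hxV
    · rw [indeg_netE_leaf (mem_Icc.2 hxV)] at hx; omega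
    · have : indeg (netE n) x ≤ 1 := by
        rcases (show x = n + 1 ∨ x = n + 2 ∨ n + 3 ≤ x by omega) with rfl | rfl | h3
        · rw [indeg_netE_root]; omega
        · rw [indeg_netE_second hn]
        · rw [indeg_netE_tree h3 (by omega)]
      omega
    · exact .inl hxV
    · exact .inr hxV
  calc numReticulations n (net n hn)
      ≤ #(Icc (2 * n + 3) (3 * n - 1) ∪ Icc (3 * n + 1) (4 * n)) := card_le_card hsub
    _ ≤ #(Icc (2 * n + 3) (3 * n - 1)) + #(Icc (3 * n + 1) (4 * n)) := card_union_le _ _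
    _ = 2 * n - 3 := by rw [Nat.card_Icc, Nat.card_Icc]; omega

/-- The vertices `r (j+1), t (j+1), …, r (j+c), t (j+c)` of the network, in this order,
where `r 2` (which does not exist) is skipped. -/
def thread (n : ℕ) : ℕ → ℕ → List ℕ
  | _, 0 => []
  | j, c + 1 => (if j + 1 = 2 then [n + 2] else [2 * n + (j + 1), n + (j + 1)]) ++
      thread n (j + 1) c

section Thread

variable {n : ℕ}

lemma mem_thread {x : ℕ} : ∀ {j c : ℕ}, 1 ≤ j → (x ∈ thread n j c ↔
    (n + j < x ∧ x ≤ n + j + c) ∨ (2 * n + 3 ≤ x ∧ 2 * n + j < x ∧ x ≤ 2 * n + j + c))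
  | j, 0, _ => by simp only [thread, List.not_mem_nil, false_iff]; omega
  | j, c + 1, hj => by
    rw [thread, List.mem_append, mem_thread (by omega : 1 ≤ j + 1)]
    split_ifs <;> simp only [List.mem_cons, List.not_mem_nil, or_false] <;> omega

lemma thread_nodup : ∀ {j c : ℕ}, 1 ≤ j → j + c < n → (thread n j c).Nodup
  | j, 0, _, _ => List.nodup_nil
  | j, c + 1, hj, hjc => by
    rw [thread, List.nodup_append]
    refine ⟨by split_ifs <;> simp; omega, thread_nodup (by omega) (by omega), fun x hx y hy => ?_⟩
    rw [mem_thread (by omega)] at hy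
    split_ifs at hx <;> simp only [List.mem_cons, List.not_mem_nil, or_false] at hx <;> omega

/-- The thread from `t j` through `t (n-1)` and then `s ℓ` to the leaf `ℓ` runs in the network. -/
lemma pathE_thread_subset (hn : 3 ≤ n) {ℓ : ℕ} (hℓ : ℓ ∈ Icc 1 n) :
    ∀ {j c : ℕ}, 1 ≤ j → j + c = n - 1 →
      pathE (n + j) (thread n j c ++ [3 * n + ℓ]) ℓ ⊆ netE n
  | j, 0, _, hjc => by
    rw [mem_Icc] at hℓ
    intro e he
    simp only [thread, List.nil_append, pathE, mem_insert, mem_singleton] at he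
    rcases he with rfl | rfl <;> rw [mem_netE, mem_netV, mem_netV] <;> omega
  | j, c + 1, hj, hjc => by
    have hrest := pathE_thread_subset hn hℓ (j := j + 1) (c := c) (by omega) (by omega)
    rw [mem_Icc] at hℓ
    intro e he
    by_cases h2 : j + 1 = 2
    · simp only [thread, if_pos h2, List.cons_append, List.nil_append, pathE, mem_insert] at he
      rcases he with rfl | he
      · rw [mem_netE, mem_netV, mem_netV]; omega
      · exact hrest (by rwa [show n + (j + 1) = n + 2 by omega])
    · simp only [thread, if_neg h2, List.cons_append, List.nil_append, pathE, mem_insert] at he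
      rcases he with rfl | rfl | he
      · rw [mem_netE, mem_netV, mem_netV]; omega
      · rw [mem_netE, mem_netV, mem_netV]; omega
      · exact hrest he

end Thread

namespace RPN

variable {n : ℕ} (T : RPN n)

/-- Leaves stay in place and the internal vertex of rank `j` goes to the tree vertex `t j`. -/
noncomputable def embed (x : ℕ) : ℕ := if x ∈ Icc 1 n then x else n + T.topoRank x

open Classical in
/-- The tree vertices of the network not hit by `embed` are threaded onto the route of this
edge. -/
noncomputable def threadEdge : ℕ × ℕ :=
  if h : ∃ e ∈ T.E, T.topoRank e.1 = #T.internal ∧ e.2 ∈ Icc 1 n then h.choose else (0, 0)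

/-- The interior of the route of the edge `e = (u, w)`: `s w` when `w` is a leaf, `r j` when
`w` has rank `j ≥ 3`, nothing when `w` has rank `2` (`t 1 → t 2` is an edge). -/
noncomputable def routeMids (e : ℕ × ℕ) : List ℕ :=
  if e = T.threadEdge then thread n #T.internal (n - 1 - #T.internal) ++ [3 * n + e.2]
  else if e.2 ∈ Icc 1 n then [3 * n + e.2]
  else if T.topoRank e.2 = 2 then [] else [2 * n + T.topoRank e.2]

noncomputable def route (e : ℕ × ℕ) : Route := ⟨T.embed e.1, T.routeMids e, T.embed e.2⟩

noncomputable def routes : List Route := T.E.toList.map T.route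

variable {T} {e e' : ℕ × ℕ} {x : ℕ}

lemma embed_of_mem_Icc (hx : x ∈ Icc 1 n) : T.embed x = x := if_pos hx

lemma embed_of_mem_internal {v : ℕ} (hv : v ∈ T.internal) : T.embed v = n + T.topoRank v :=
  if_neg (mem_sdiff.1 hv).2

lemma mem_image_embed_internal :
    x ∈ T.internal.image T.embed ↔ n < x ∧ x ≤ n + #T.internal := by
  rw [image_congr fun v hv => embed_of_mem_internal hv]
  constructor
  · intro h
    obtain ⟨v, hv, rfl⟩ := mem_image.1 h
    have := mem_Icc.1 (topoRank_mem_Icc hv)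
    omega
  · intro h
    have hx : x - n ∈ T.internal.image T.topoRank := by rw [image_topoRank, mem_Icc]; omega
    obtain ⟨v, hv, hvx⟩ := mem_image.1 hx
    exact mem_image.2 ⟨v, hv, by omega⟩

lemma mem_image_embed :
    x ∈ T.V.image T.embed ↔ (1 ≤ x ∧ x ≤ n) ∨ (n < x ∧ x ≤ n + #T.internal) := by
  rw [T.V_eq_Icc_union_internal, image_union, mem_union, mem_image_embed_internal,
    image_congr fun x hx => embed_of_mem_Icc hx, image_id', mem_Icc]

lemma embed_injOn : Set.InjOn T.embed T.V := by
  intro u hu v hv h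
  rw [mem_coe, T.V_eq_Icc_union_internal, mem_union] at hu hv
  rcases hu with hu | hu <;> rcases hv with hv | hv
  · rwa [embed_of_mem_Icc hu, embed_of_mem_Icc hv] at h
  · rw [embed_of_mem_Icc hu, embed_of_mem_internal hv] at h
    have := mem_Icc.1 hu; have := mem_Icc.1 (topoRank_mem_Icc hv); omega
  · rw [embed_of_mem_internal hu, embed_of_mem_Icc hv] at h
    have := mem_Icc.1 hv; have := mem_Icc.1 (topoRank_mem_Icc hu); omega
  · rw [embed_of_mem_internal hu, embed_of_mem_internal hv] at h
    exact topoRank_injOn hu hv (by omega)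

lemma embed_root (hn : 2 ≤ n) : T.embed T.root = n + 1 := by
  rw [embed_of_mem_internal (T.root_mem_internal hn), topoRank_root]

lemma topoRank_fst_mem_Icc (he : e ∈ T.E) : T.topoRank e.1 ∈ Icc 1 #T.internal :=
  topoRank_mem_Icc (fst_mem_internal he)

lemma topoRank_fst_lt_snd (he : e ∈ T.E) : T.topoRank e.1 < T.topoRank e.2 :=
  topoRank_lt_of_mem (show (e.1, e.2) ∈ T.E from he)

lemma snd_mem_Icc_or_internal (he : e ∈ T.E) : e.2 ∈ Icc 1 n ∨ e.2 ∈ T.internal := by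
  by_cases h : e.2 ∈ Icc 1 n
  · exact .inl h
  · exact .inr (mem_sdiff.2 ⟨(T.edge_mem e he).2, h⟩)

lemma IsTree.threadEdge_spec (hT : T.IsTree) (hn : 2 ≤ n) :
    T.threadEdge ∈ T.E ∧ T.topoRank T.threadEdge.1 = #T.internal ∧
      T.threadEdge.2 ∈ Icc 1 n := by
  classical
  suffices h : ∃ e ∈ T.E, T.topoRank e.1 = #T.internal ∧ e.2 ∈ Icc 1 n by
    rw [threadEdge, dif_pos h]
    exact h.choose_spec
  have hk : #T.internal ∈ T.internal.image T.topoRank := by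
    rw [image_topoRank, mem_Icc]
    exact ⟨card_pos.2 ⟨_, T.root_mem_internal hn⟩, le_rfl⟩
  obtain ⟨u, hu, hku⟩ := mem_image.1 hk
  obtain ⟨e, hef⟩ := card_pos.1 (lt_of_lt_of_le two_pos (hT.two_le_outdeg hn hu))
  obtain ⟨he, rfl⟩ := mem_filter.1 hef
  refine ⟨e, he, hku, (snd_mem_Icc_or_internal he).resolve_right fun hw => ?_⟩
  have := topoRank_fst_lt_snd he
  have := mem_Icc.1 (topoRank_mem_Icc hw)
  omega

lemma IsTree.mem_routeMids (hT : T.IsTree) (hn : 3 ≤ n) (he : e ∈ T.E) :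
    x ∈ T.routeMids e ↔
      (e = T.threadEdge ∧ (x = 3 * n + e.2 ∨ (n + #T.internal < x ∧ x < 2 * n) ∨
        (2 * n + 3 ≤ x ∧ 2 * n + #T.internal < x ∧ x < 3 * n))) ∨
      (e ≠ T.threadEdge ∧ 1 ≤ e.2 ∧ e.2 ≤ n ∧ x = 3 * n + e.2) ∨
      (e ≠ T.threadEdge ∧ e.2 ∈ T.internal ∧ 3 ≤ T.topoRank e.2 ∧
        T.topoRank e.2 ≤ #T.internal ∧ x = 2 * n + T.topoRank e.2) := by
  have hk := mem_Icc.1 (topoRank_fst_mem_Icc he)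
  have hkn := hT.card_internal_le (by omega)
  unfold routeMids
  split_ifs with hθ hleaf h2
  · rw [List.mem_append, mem_thread (hk.1.trans hk.2), List.mem_singleton]
    simp only [hθ, true_and, ne_eq, not_true_eq_false, false_and, or_false]
    omega
  · simp only [List.mem_singleton, hθ, false_and, false_or, ne_eq, not_false_eq_true, true_and]
    have := mem_Icc.1 hleaf
    constructor
    · exact fun h => .inl ⟨this.1, this.2, h⟩
    · rintro (h | ⟨hi, -⟩)
      · exact h.2.2
      · exact absurd hleaf (mem_sdiff.1 hi).2
  · simp only [List.not_mem_nil, false_iff, hθ, false_and, false_or, ne_eq]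
    rintro (⟨-, h⟩ | ⟨-, -, h, -⟩)
    · exact hleaf (mem_Icc.2 ⟨h.1, h.2.1⟩)
    · omega
  · have hi := (snd_mem_Icc_or_internal he).resolve_left hleaf
    have := topoRank_fst_lt_snd he
    have := mem_Icc.1 (topoRank_mem_Icc hi)
    simp only [List.mem_singleton, hθ, false_and, false_or, ne_eq, not_false_eq_true, true_and]
    constructor
    · exact fun h => .inr ⟨hi, by omega, by omega, h⟩
    · rintro (⟨h₁, h₂, -⟩ | ⟨-, -, -, h⟩)
      · exact absurd (mem_Icc.2 ⟨h₁, h₂⟩) hleaf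
      · exact h

lemma IsTree.routeMids_nodup (hT : T.IsTree) (hn : 3 ≤ n) (e : ℕ × ℕ) :
    (T.routeMids e).Nodup := by
  have hk : 1 ≤ #T.internal := card_pos.2 ⟨_, T.root_mem_internal (by omega)⟩
  have hkn := hT.card_internal_le (by omega)
  unfold routeMids
  split_ifs
  · refine List.nodup_append.2 ⟨thread_nodup hk (by omega), List.nodup_singleton _,
      fun x hx y hy => ?_⟩
    rw [mem_thread hk] at hx
    rw [List.mem_singleton] at hy
    omega
  all_goals simp

lemma IsTree.routeMids_disjoint (hT : T.IsTree) (hn : 3 ≤ n) (he : e ∈ T.E) (he' : e' ∈ T.E)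
    (hne : e ≠ e') : (T.routeMids e).Disjoint (T.routeMids e') := by
  intro x hx hx'
  have hsnd : e.2 ≠ e'.2 := fun h => hne (hT.eq_of_snd_eq he he' h)
  have hkn := hT.card_internal_le (by omega)
  rw [hT.mem_routeMids hn he] at hx
  rw [hT.mem_routeMids hn he'] at hx'
  rcases hx with ⟨hθ, hx⟩ | ⟨-, -, -, hx⟩ | ⟨-, hi, -, hk, hx⟩ <;>
    rcases hx' with ⟨hθ', hx'⟩ | ⟨-, -, -, hx'⟩ | ⟨-, hi', -, hk', hx'⟩
  · exact hne (hθ.trans hθ'.symm)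
  all_goals first
    | omega
    | exact hne (hT.eq_of_snd_eq he he' (topoRank_injOn hi hi' (by omega)))

lemma mem_routes {r : Route} : r ∈ T.routes ↔ ∃ e ∈ T.E, T.route e = r := by
  simp [routes]

lemma mem_flatMap_routes_mids : x ∈ T.routes.flatMap Route.mids ↔ ∃ e ∈ T.E, x ∈ T.routeMids e := by
  simp [routes, List.mem_flatMap, route]

lemma IsTree.nodup_flatMap_routes_mids (hT : T.IsTree) (hn : 3 ≤ n) :
    (T.routes.flatMap Route.mids).Nodup := by
  rw [routes, List.flatMap_map]
  refine List.nodup_flatMap.2 ⟨fun e _ => hT.routeMids_nodup hn e, ?_⟩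
  exact T.E.nodup_toList.imp_of_mem fun ha hb hne =>
    hT.routeMids_disjoint hn (mem_toList.1 ha) (mem_toList.1 hb) hne

lemma IsTree.exists_mem_routeMids (hT : T.IsTree) (hn : 3 ≤ n) (hxV : x ∈ netV n)
    (hx : x ∉ T.V.image T.embed) : ∃ e ∈ T.E, x ∈ T.routeMids e := by
  obtain ⟨hθE, -, hθleaf⟩ := hT.threadEdge_spec (by omega)
  have hroot := T.root_mem_internal (by omega)
  rw [mem_netV] at hxV
  rw [mem_image_embed] at hx
  have hparent : ∀ {v}, v ∈ T.internal ∪ Icc 1 n → v ≠ T.root → ∃ e ∈ T.E, e.2 = v := by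
    intro v hv hne
    have hvV : v ∈ T.V := by rw [T.V_eq_Icc_union_internal, union_comm]; exact hv
    obtain ⟨u, hu⟩ := T.exists_mem_E_of_ne_root hvV hne
    exact ⟨_, hu, rfl⟩
  have hthread : (n + #T.internal < x ∧ x < 2 * n) ∨
      (2 * n + 3 ≤ x ∧ 2 * n + #T.internal < x ∧ x < 3 * n) →
      ∃ e ∈ T.E, x ∈ T.routeMids e :=
    fun h => ⟨_, hθE, (hT.mem_routeMids hn hθE).2 (.inl ⟨rfl, .inr h⟩)⟩
  rcases hxV with hxV | hxV | hxV | hxV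
  · omega
  · exact hthread (.inl (by omega))
  · by_cases hj : x - 2 * n ≤ #T.internal
    · have hjmem : x - 2 * n ∈ T.internal.image T.topoRank := by
        rw [image_topoRank, mem_Icc]; omega
      obtain ⟨w, hw, hwj⟩ := mem_image.1 hjmem
      have hwr : w ≠ T.root := fun h => by rw [h, topoRank_root] at hwj; omega
      obtain ⟨e, he, rfl⟩ := hparent (mem_union_left _ hw) hwr
      have hne : e ≠ T.threadEdge := fun h => (mem_sdiff.1 hw).2 (h ▸ hθleaf)
      exact ⟨e, he, (hT.mem_routeMids hn he).2 (.inr (.inr ⟨hne, hw, by omega, by omega,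
        by omega⟩))⟩
    · exact hthread (.inr (by omega))
  · have hℓ : x - 3 * n ∈ Icc 1 n := mem_Icc.2 (by omega)
    obtain ⟨e, he, hex⟩ := hparent (mem_union_right _ hℓ)
      (fun h => (mem_sdiff.1 hroot).2 (h ▸ hℓ))
    refine ⟨e, he, (hT.mem_routeMids hn he).2 ?_⟩
    by_cases hne : e = T.threadEdge
    · exact .inl ⟨hne, .inl (by omega)⟩
    · exact .inr (.inl ⟨hne, by omega, by omega, by omega⟩)

lemma IsTree.mem_flatMap_routes_mids_iff (hT : T.IsTree) (hn : 3 ≤ n) :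
    x ∈ T.routes.flatMap Route.mids ↔ x ∈ netV n ∧ x ∉ T.V.image T.embed := by
  refine ⟨fun hx => ?_, fun ⟨hxV, hx⟩ => mem_flatMap_routes_mids.2
    (hT.exists_mem_routeMids hn hxV hx)⟩
  obtain ⟨e, he, hx⟩ := mem_flatMap_routes_mids.1 hx
  have hθ := mem_Icc.1 (hT.threadEdge_spec (by omega)).2.2
  have hkn := hT.card_internal_le (by omega)
  rw [mem_netV, mem_image_embed]
  rw [hT.mem_routeMids hn he] at hx
  rcases hx with ⟨rfl, hx⟩ | ⟨-, hx⟩ | ⟨-, -, hx⟩ <;> omega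

lemma IsTree.routesE_subset (hT : T.IsTree) (hn : 3 ≤ n) : routesE T.routes ⊆ netE n := by
  intro f hf
  obtain ⟨r, hr, hf⟩ := mem_routesE.1 hf
  obtain ⟨e, he, rfl⟩ := mem_routes.1 hr
  have hi := mem_Icc.1 (topoRank_fst_mem_Icc he)
  have hlt := topoRank_fst_lt_snd he
  have hkn := hT.card_internal_le (by omega)
  simp only [Route.edges, route, routeMids, embed_of_mem_internal (fst_mem_internal he)] at hf
  split_ifs at hf with hθ hleaf h2
  · obtain ⟨-, hθk, hθleaf⟩ := hT.threadEdge_spec (by omega)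
    subst hθ
    rw [embed_of_mem_Icc hθleaf, hθk] at hf
    exact pathE_thread_subset hn hθleaf (by omega) (by omega) hf
  · rw [embed_of_mem_Icc hleaf] at hf
    have := mem_Icc.1 hleaf
    simp only [pathE, mem_insert, mem_singleton] at hf
    rcases hf with rfl | rfl <;> rw [mem_netE, mem_netV, mem_netV] <;> omega
  all_goals
    have hw := (snd_mem_Icc_or_internal he).resolve_left hleaf
    have := mem_Icc.1 (topoRank_mem_Icc hw)
    rw [embed_of_mem_internal hw] at hf
    simp only [pathE, mem_insert, mem_singleton] at hf
  · subst hf; rw [mem_netE, mem_netV, mem_netV]; omega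
  · rcases hf with rfl | rfl <;> rw [mem_netE, mem_netV, mem_netV] <;> omega

lemma route_src_ne_tgt (he : e ∈ T.E) : (T.route e).src ≠ (T.route e).tgt := fun h =>
  T.no_loop e he (embed_injOn (T.edge_mem e he).1 (T.edge_mem e he).2 h)

lemma IsTree.eq_of_route_tgt_eq (hT : T.IsTree) {r r' : Route} (hr : r ∈ T.routes)
    (hr' : r' ∈ T.routes) (h : r.tgt = r'.tgt) : r = r' := by
  obtain ⟨e, he, rfl⟩ := mem_routes.1 hr
  obtain ⟨e', he', rfl⟩ := mem_routes.1 hr'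
  rw [hT.eq_of_snd_eq he he' (embed_injOn (T.edge_mem e he).2 (T.edge_mem e' he').2 h)]

lemma IsTree.route_ends_notMem_mids (hT : T.IsTree) (hn : 3 ≤ n) :
    ∀ x ∈ T.routes.flatMap Route.mids, ∀ r ∈ T.routes, r.src ≠ x ∧ r.tgt ≠ x := by
  intro x hx r hr
  obtain ⟨e, he, rfl⟩ := mem_routes.1 hr
  have hx := ((hT.mem_flatMap_routes_mids_iff hn).1 hx).2
  exact ⟨fun h => hx (h ▸ mem_image_of_mem _ (T.edge_mem e he).1),
    fun h => hx (h ▸ mem_image_of_mem _ (T.edge_mem e he).2)⟩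

lemma image_fst_routesE_routes : (routesE T.routes).image Prod.fst =
    T.internal.image T.embed ∪ (T.routes.flatMap Route.mids).toFinset := by
  rw [image_fst_routesE, ← T.image_fst_E, image_image]
  congr 1
  ext
  simp [routes, route]

lemma image_snd_routesE_routes : (routesE T.routes).image Prod.snd =
    (T.V.erase T.root).image T.embed ∪ (T.routes.flatMap Route.mids).toFinset := by
  rw [image_snd_routesE, ← T.image_snd_E, image_image]
  congr 1
  ext
  simp [routes, route]

lemma toFinset_map_shortcut_routes :
    (T.routes.map Route.shortcut).toFinset = (imageGraph T.embed (T.V, T.E)).2 := by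
  ext
  simp [routes, route, Route.shortcut, imageGraph]

lemma IsTree.image_embed_subset (hT : T.IsTree) (hn : 3 ≤ n) : T.V.image T.embed ⊆ netV n := by
  intro x hx
  have := hT.card_internal_le (by omega)
  rw [mem_image_embed] at hx
  rw [mem_netV]
  omega

lemma IsTree.image_snd_routesE_eq (hT : T.IsTree) (hn : 3 ≤ n) :
    (routesE T.routes).image Prod.snd = (netV n).erase (n + 1) := by
  rw [image_snd_routesE_routes]
  ext x
  simp only [mem_union, mem_erase, List.mem_toFinset, hT.mem_flatMap_routes_mids_iff hn]
  constructor
  · rintro (hx | ⟨hxV, hx⟩)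
    · obtain ⟨v, hv, rfl⟩ := mem_image.1 hx
      obtain ⟨hvr, hvV⟩ := mem_erase.1 hv
      exact ⟨fun h => hvr (embed_injOn hvV T.root_mem (h.trans (embed_root (by omega)).symm)),
        hT.image_embed_subset hn (mem_image_of_mem _ hvV)⟩
    · exact ⟨fun h => hx (h ▸ embed_root (T := T) (by omega) ▸ mem_image_of_mem _ T.root_mem), hxV⟩
  · rintro ⟨hne, hxV⟩
    by_cases hx : x ∈ T.V.image T.embed
    · obtain ⟨v, hv, rfl⟩ := mem_image.1 hx
      refine .inl (mem_image_of_mem _ (mem_erase.2 ⟨fun h => hne ?_, hv⟩))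
      rw [h, embed_root (by omega)]
    · exact .inr ⟨hxV, hx⟩

lemma IsTree.outdeg_routesE_eq_zero_iff (hT : T.IsTree) (hn : 3 ≤ n) {v : ℕ} (hv : v ∈ netV n) :
    outdeg (routesE T.routes) v = 0 ↔ v ∈ Icc 1 n := by
  have hfst : v ∈ (routesE T.routes).image Prod.fst ↔ v ∉ Icc 1 n := by
    rw [image_fst_routesE_routes, mem_union, List.mem_toFinset,
      hT.mem_flatMap_routes_mids_iff hn, mem_image_embed_internal, mem_image_embed, mem_Icc,
      mem_netV]
    rw [mem_netV] at hv
    omega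
  rw [← not_iff_not, ← hfst, outdeg_eq_zero_iff, mem_image]
  push Not
  rfl

lemma IsTree.isSupportTree_routesE (hT : T.IsTree) (hn : 3 ≤ n) :
    IsSupportTree n (net n hn) (routesE T.routes) := by
  have hsub := hT.routesE_subset hn
  have hsnd := hT.image_snd_routesE_eq hn
  refine ⟨hsub, ?_, ?_, ?_⟩
  · have hcard := card_image_of_injOn (snd_injOn_routesE (hT.nodup_flatMap_routes_mids hn)
      (hT.route_ends_notMem_mids hn) fun _ hr _ hr' => hT.eq_of_route_tgt_eq hr hr')
    have hroot : n + 1 ∈ netV n := by rw [mem_netV]; omega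
    rw [hsnd, card_erase_of_mem hroot] at hcard
    have := card_pos.2 ⟨_, hroot⟩
    show _ = #(netV n)
    omega
  · refine reach_of_grade (fun e he => netGrade_lt_of_mem (hsub he)) fun v hv hne => ?_
    obtain ⟨e, he, rfl⟩ := mem_image.1 (hsnd ▸ mem_erase.2 ⟨hne, hv⟩)
    exact ⟨e.1, (netE_mem_netV (hsub he)).1, he⟩
  · ext v
    rw [mem_filter]
    exact ⟨fun ⟨hv, h⟩ => (hT.outdeg_routesE_eq_zero_iff hn hv).1 h,
      fun h => ⟨(net n hn).Icc_subset_V h,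
        (hT.outdeg_routesE_eq_zero_iff hn ((net n hn).Icc_subset_V h)).2 h⟩⟩

lemma IsTree.suppress_routesE (hT : T.IsTree) (hn : 3 ≤ n) :
    Relation.ReflTransGen SuppressStep ((net n hn).V, routesE T.routes)
      (imageGraph T.embed (T.V, T.E)) := by
  have h := suppress_routes T.routes (netV n) ∅ (hT.nodup_flatMap_routes_mids hn)
    (fun x hx => ((hT.mem_flatMap_routes_mids_iff hn).1 hx).1) (by simp)
    (hT.route_ends_notMem_mids hn) fun r hr => by
      obtain ⟨e, he, rfl⟩ := mem_routes.1 hr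
      exact route_src_ne_tgt he
  have hV : netV n \ (T.routes.flatMap Route.mids).toFinset =
      (imageGraph T.embed (T.V, T.E)).1 := by
    ext x
    rw [mem_sdiff, List.mem_toFinset, hT.mem_flatMap_routes_mids_iff hn]
    exact ⟨fun ⟨hxV, hx⟩ => by by_contra h; exact hx ⟨hxV, h⟩,
      fun hx => ⟨hT.image_embed_subset hn hx, fun h => h.2 hx⟩⟩
  rw [empty_union, empty_union, toFinset_map_shortcut_routes, hV] at h
  exact h

end RPN

theorem universal_net (n : ℕ) (hn : 3 ≤ n) : UniversalRPN n (net n hn) := fun _ hT =>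
  isBaseTree_of_suppress hT (hT.isSupportTree_routesE hn) RPN.embed_injOn
    (fun _ hx => RPN.embed_of_mem_Icc hx) (hT.suppress_routesE hn)

def star (n : ℕ) (hn : 2 ≤ n) : RPN n where
  V := insert 0 (Icc 1 n)
  E := (Icc 1 n).image fun ℓ => (0, ℓ)
  edge_mem := by
    simp only [forall_mem_image]
    exact fun ℓ hℓ => ⟨mem_insert_self _ _, mem_insert_of_mem hℓ⟩
  no_loop := by
    simp only [forall_mem_image, mem_Icc]
    exact fun ℓ hℓ => Nat.ne_of_lt hℓ.1
  root := 0
  root_mem := mem_insert_self _ _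
  reach_root := by
    simp only [forall_mem_insert]
    exact ⟨.refl, fun ℓ hℓ => .single (mem_image_of_mem _ hℓ)⟩
  acyclic := not_transGen_self_of_grade (g := id) (by
    simp only [forall_mem_image, mem_Icc]
    exact fun ℓ hℓ => hℓ.1)
  leaves_eq := by
    have h0 : outdeg ((Icc 1 n).image fun ℓ => (0, ℓ)) 0 ≠ 0 :=
      (outdeg_pos_of_mem (v := 1) (mem_image_of_mem _ (mem_Icc.2 ⟨le_rfl, by omega⟩))).ne'
    have hℓ : ∀ ℓ ∈ Icc 1 n, outdeg ((Icc 1 n).image fun ℓ => (0, ℓ)) ℓ = 0 := fun ℓ hℓ =>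
      outdeg_eq_zero_iff.2 (by simp only [forall_mem_image]; intro _ _; have := mem_Icc.1 hℓ; omega)
    rw [filter_insert, if_neg h0, filter_true_of_mem hℓ]
  degree_cond := by
    refine .inr ⟨indeg_eq_zero_iff.2 ?_, two_le_outdeg_of_mem (v := 1) (w := 2)
      (mem_image_of_mem _ (mem_Icc.2 ⟨le_rfl, by omega⟩))
      (mem_image_of_mem _ (mem_Icc.2 ⟨by omega, hn⟩)) (by omega), ?_⟩
    · simp only [forall_mem_image, mem_Icc]
      omega
    · simp only [mem_insert, forall_eq_or_imp, ne_eq, not_true_eq_false, IsEmpty.forall_iff,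
        true_and]
      intro ℓ hℓ _
      refine .inl ⟨outdeg_eq_zero_iff.2 ?_, indeg_eq_one_of_forall (u := 0)
        (mem_image_of_mem _ hℓ) ?_⟩
      · simp only [forall_mem_image]; intro _ _; have := mem_Icc.1 hℓ; omega
      · simp only [forall_mem_image]; intro _ _ h; rw [h]

lemma isTree_star {n : ℕ} (hn : 2 ≤ n) : (star n hn).IsTree := by
  show #((Icc 1 n).image fun ℓ => (0, ℓ)) + 1 = #(insert 0 (Icc 1 n))
  rw [card_image_of_injective _ fun a b h => (Prod.ext_iff.1 h).2,
    card_insert_of_notMem (by simp)]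

namespace RPN

variable {n : ℕ} {T : RPN n}

lemma V_eq_insert_root (h : T.internal = {T.root}) :
    T.V = insert T.root (Icc 1 n) := by
  rw [T.V_eq_Icc_union_internal, h, union_comm, insert_eq]

lemma E_eq_image_root (hn : 2 ≤ n) (h : T.internal = {T.root}) :
    T.E = (Icc 1 n).image fun ℓ => (T.root, ℓ) := by
  have hroot : T.root ∉ Icc 1 n := (mem_sdiff.1 (T.root_mem_internal hn)).2
  have hsrc : ∀ {e}, e ∈ T.E → e.1 = T.root := fun he => by
    simpa [h] using fst_mem_internal he
  ext e
  constructor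
  · intro he
    have hw : e.2 ∈ T.V.erase T.root := T.image_snd_E ▸ mem_image_of_mem Prod.snd he
    rw [V_eq_insert_root h, erase_insert hroot] at hw
    exact mem_image.2 ⟨e.2, hw, by rw [← hsrc he]⟩
  · intro he
    obtain ⟨ℓ, hℓ, rfl⟩ := mem_image.1 he
    obtain ⟨u, hu⟩ := T.exists_mem_E_of_ne_root (T.Icc_subset_V hℓ) (ne_of_mem_of_not_mem hℓ hroot)
    rwa [← hsrc hu]

lemma IsTree.isBaseTree_star (hT : T.IsTree) (hn : 2 ≤ n) (h : T.internal = {T.root}) :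
    IsBaseTree n (star n hn) T := by
  have hroot : T.root ∉ Icc 1 n := (mem_sdiff.1 (T.root_mem_internal hn)).2
  let f : ℕ → ℕ := fun x => if x = T.root then 0 else x
  have hfix : ∀ x ∈ Icc 1 n, f x = x := fun x hx => if_neg (ne_of_mem_of_not_mem hx hroot)
  have hf : Set.InjOn f T.V := by
    rw [V_eq_insert_root h]
    intro a ha b hb hab
    simp only [coe_insert, Set.mem_insert_iff, mem_coe, mem_Icc] at ha hb hroot
    simp only [f] at hab
    split_ifs at hab <;> omega
  have himage : imageGraph f (T.V, T.E) = ((star n hn).V, (star n hn).E) := by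
    simp only [imageGraph, V_eq_insert_root h, E_eq_image_root hn h, image_insert, image_image]
    refine Prod.ext ?_ (image_congr fun ℓ hℓ => ?_)
    · show insert (f T.root) (image f (Icc 1 n)) = insert 0 (Icc 1 n)
      rw [(image_congr fun x hx => hfix x hx).trans image_id', show f T.root = 0 from if_pos rfl]
    · simp [f, hfix ℓ hℓ]
  exact isBaseTree_of_suppress hT (isTree_star hn).isSupportTree_E hf hfix (himage ▸ .refl)

end RPN

lemma universal_star_two : UniversalRPN 2 (star 2 le_rfl) := fun T hT =>
  hT.isBaseTree_star le_rfl (eq_of_subset_of_card_le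
    (singleton_subset_iff.2 (T.root_mem_internal le_rfl))
    (by simpa using hT.card_internal_le le_rfl)).symm

/-- For every integer `n ≥ 2` there exists a rooted non-binary universal
tree-based network with `n` leaves having at most `(n-2)^2 + n` reticulation
vertices (in particular, one with `O(n^2)` reticulations). -/
theorem exists_universal_tree_based_network_quadratic_reticulations :
    ∀ n : ℕ, 2 ≤ n → ∃ N : RPN n, TreeBased n N ∧ UniversalRPN n N ∧
      numReticulations n N ≤ (n - 2) ^ 2 + n := by
  intro n hn
  obtain rfl | hn := hn.eq_or_lt
  · refine ⟨star 2 le_rfl, ⟨_, (isTree_star le_rfl).isSupportTree_E⟩, universal_star_two, ?_⟩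
    rw [(isTree_star le_rfl).numReticulations_eq_zero]
    omega
  · refine ⟨net n hn, ⟨_, (isTree_star hn.le).isSupportTree_routesE hn⟩, universal_net n hn, ?_⟩
    have := numReticulations_net n hn
    have : n - 2 ≤ (n - 2) ^ 2 := Nat.le_self_pow two_ne_zero _
    omega
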